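/- Let p be a prime and let t ≥ 1 and nonnegative integers r_i, s_i (1 ≤ i ≤ t) satisfy s_i ≥ s_{i-1} + r_{i-1} + 2 for 2 ≤ i ≤ t. Set d_i = r_i + 1 and u_i = (s_i + 1) − Σ_{j=1}^{i-1}(r_j + 1). Then Σ_{i=1}^{t} (p^{d_i} − 1) · (Π_{j=1}^{i-1} p^{d_j}) · p^{u_i} · (p−1)/2 = δ · p(p−1)^2/2, where δ = Σ_{i=1}^{t} p^{s_i}(1 + p + ... + p^{r_i}). -/

import Mathlib

/-!
The identity holds summand by summand: `p ^ (r i + 1) - 1 = (1 + p + ⋯ + p ^ r i) (p - 1)`, and the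
exponent `u_i` is chosen so that `(∏_{j<i} p ^ d_j) · p ^ u_i = p ^ (s_i + 1)`.
-/

open Finset

theorem prod_pow_mul_zpow_sub_sum {K ι : Type*} [CommGroupWithZero K] {x : K} (hx : x ≠ 0)
    (s : Finset ι) (e : ι → ℕ) (n : ℤ) :
    (∏ j ∈ s, x ^ e j) * x ^ (n - ∑ j ∈ s, (e j : ℤ)) = x ^ n := by
  rw [prod_pow_eq_pow_sum, ← zpow_natCast, ← zpow_add₀ hx, Nat.cast_sum, add_sub_cancel]

theorem genus_summand_eq {K : Type*} [Field K] {x : K} (hx : x ≠ 0) (r : ℕ → ℕ) (s i : ℕ) :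
    (x ^ (r i + 1) - 1) * (∏ j ∈ range i, x ^ (r j + 1)) *
        x ^ ((s + 1 : ℤ) - ∑ j ∈ range i, ((r j : ℤ) + 1)) * (x - 1) / 2 =
      x ^ s * (∑ j ∈ range (r i + 1), x ^ j) * x * (x - 1) ^ 2 / 2 := by
  have hpow : (∏ j ∈ range i, x ^ (r j + 1)) *
      x ^ ((s + 1 : ℤ) - ∑ j ∈ range i, ((r j : ℤ) + 1)) = x ^ s * x := by
    rw [← pow_succ, ← zpow_natCast]
    simpa using prod_pow_mul_zpow_sub_sum hx (range i) (fun j => r j + 1) (s + 1)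
  rw [← geom_sum_mul]
  linear_combination (∑ j ∈ range (r i + 1), x ^ j) * (x - 1) ^ 2 / 2 * hpow

theorem genus_computation_general (p : ℕ) (hp : p.Prime) (t : ℕ)
    (r s : ℕ → ℕ) :
    ∑ i ∈ Finset.range t,
        ((p : ℚ) ^ (r i + 1) - 1) * (∏ j ∈ Finset.range i, (p : ℚ) ^ (r j + 1)) *
          (p : ℚ) ^ ((s i + 1 : ℤ) - ∑ j ∈ Finset.range i, ((r j : ℤ) + 1)) *
          ((p : ℚ) - 1) / 2 =
      (∑ i ∈ Finset.range t, (p : ℚ) ^ s i * ∑ j ∈ Finset.range (r i + 1), (p : ℚ) ^ j) *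
        (p : ℚ) * ((p : ℚ) - 1) ^ 2 / 2 := by
  have hp0 : (p : ℚ) ≠ 0 := Nat.cast_ne_zero.mpr hp.ne_zero
  simp only [sum_mul, sum_div]
  exact sum_congr rfl fun i _ => genus_summand_eq hp0 r (s i) i

/-- The genus computation in the proof of Corollary 2.7 (Karemaker–Pries):
Σ_i (p^{d_i} − 1)(Π_{j<i} p^{d_j}) p^{u_i} (p−1)/2 = δ p (p−1)²/2, where
d_i = r_i + 1, u_i = (s_i + 1) − Σ_{j<i}(r_j + 1), and
δ = Σ_i p^{s_i}(1 + p + ⋯ + p^{r_i}). -/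
theorem genus_computation (p : ℕ) (hp : p.Prime) (t : ℕ) (ht : 1 ≤ t)
    (r s : ℕ → ℕ) (hs : ∀ i, 1 ≤ i → i < t → s (i - 1) + r (i - 1) + 2 ≤ s i) :
    ∑ i ∈ Finset.range t,
        ((p : ℚ) ^ (r i + 1) - 1) * (∏ j ∈ Finset.range i, (p : ℚ) ^ (r j + 1)) *
          (p : ℚ) ^ ((s i + 1 : ℤ) - ∑ j ∈ Finset.range i, ((r j : ℤ) + 1)) *
          ((p : ℚ) - 1) / 2 =
      (∑ i ∈ Finset.range t, (p : ℚ) ^ s i * ∑ j ∈ Finset.range (r i + 1), (p : ℚ) ^ j) *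
        (p : ℚ) * ((p : ℚ) - 1) ^ 2 / 2 :=
  genus_computation_general p hp t r s
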